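/- The structure (V; f) is isomorphic to (ℕ; S), where S is the successor function: there exists a bijection τ : V → ℕ such that τ(f(v)) = τ(v) + 1 for all v ∈ V, and τ(0,0,1,1) = 0. -/

import Mathlib

/-- Conditions I-III defining the set V of 4-tuples (a,b,c,d). -/
def inV : ℕ × ℕ × ℕ × ℕ → Prop :=
  fun ⟨a, b, c, d⟩ =>
    (∃ k, c = 2 ^ k) ∧ (d = 0 ∨ d = 1) ∧ (a > 0 → b = 0 → c > 1) ∧ (a = 0 → c = 1)

open Classical in
/-- The function f defined by the six rules. -/
noncomputable def f : ℕ × ℕ × ℕ × ℕ → ℕ × ℕ × ℕ × ℕ :=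
  fun ⟨a, b, c, d⟩ =>
    if d = 0 then
      if a > 0 then
        if b > 0 then (a, b - 1, 2 * c, 0)
        else (a - 1, c, 1, 0)
      else (0, b + 1, 1, 1)
    else
      if c > 1 then (a, b + 1, c / 2, 1)
      else if ∃ k > 0, b = 2 ^ k then (a + 1, 0, b, 1)
      else (a, b, 1, 0)

/-!
The map `n ↦ f^[n] (0, 0, 1, 1)` is a bijection from `ℕ` onto `V`, and `τ` is its inverse.
It is injective because `f` has an explicit left inverse on `V` and `(0, 0, 1, 1)` is not in
`f '' V`. It is onto because every run `(a, k, 1, 1) ↝ (a, k, 1, 0)` terminates, by strong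
induction on `k`: if `k = 2 ^ j` with `j > 0`, the run pushes to `(a + 1, 0, 2 ^ j, 1)`, climbs
to `(a + 1, j, 1, 1)`, makes the shorter run to `(a + 1, j, 1, 0)` (as `j < 2 ^ j`), descends
to `(a + 1, 0, 2 ^ j, 0)` and pops back to `(a, 2 ^ j, 1, 0)`; every element of `V` lies on
such runs.
-/

open Set Function Relation

theorem exists_iterate_eq_of_reflTransGen {α : Type*} {f : α → α} {x y : α}
    (h : ReflTransGen (fun v w => f v = w) x y) : ∃ n, f^[n] x = y := by
  induction h with
  | refl => exact ⟨0, rfl⟩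
  | tail _ hyz ih =>
    obtain ⟨n, rfl⟩ := ih
    exact ⟨n + 1, by rw [iterate_succ_apply', hyz]⟩

theorem injective_iterate_apply_of_notMem_image {α : Type*} {V : Set α} {f : α → α} {x₀ : α}
    (hf : MapsTo f V V) (hinj : InjOn f V) (hx₀ : x₀ ∈ V) (hx₀f : x₀ ∉ f '' V) :
    Injective fun n => f^[n] x₀ := by
  have hmem (n : ℕ) : f^[n] x₀ ∈ V := hf.iterate n hx₀
  intro m n hmn
  induction m generalizing n with
  | zero =>
    cases n with
    | zero => rfl
    | succ n =>
      simp only [iterate_succ_apply', iterate_zero_apply] at hmn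
      exact absurd ⟨_, hmem n, hmn.symm⟩ hx₀f
  | succ m ih =>
    cases n with
    | zero =>
      simp only [iterate_succ_apply', iterate_zero_apply] at hmn
      exact absurd ⟨_, hmem m, hmn⟩ hx₀f
    | succ n =>
      simp only [iterate_succ_apply'] at hmn
      rw [ih (hinj (hmem m) (hmem n) hmn)]

theorem exists_bijOn_nat_of_reflTransGen {α : Type*} {V : Set α} {f : α → α} {x₀ : α}
    (hf : MapsTo f V V) (hinj : InjOn f V) (hx₀ : x₀ ∈ V) (hx₀f : x₀ ∉ f '' V)
    (hreach : ∀ v ∈ V, ReflTransGen (fun v w => f v = w) x₀ v) :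
    ∃ τ : α → ℕ, BijOn τ V univ ∧ (∀ v ∈ V, τ (f v) = τ v + 1) ∧ τ x₀ = 0 := by
  set orbit : ℕ → α := fun n => f^[n] x₀
  have horbit : BijOn orbit univ V :=
    ⟨fun n _ => hf.iterate n hx₀,
     (injective_iterate_apply_of_notMem_image hf hinj hx₀ hx₀f).injOn,
     fun v hv => (exists_iterate_eq_of_reflTransGen (hreach v hv)).imp fun n hn => ⟨trivial, hn⟩⟩
  have hinv := horbit.invOn_invFunOn
  have hτ (n : ℕ) : invFunOn orbit univ (orbit n) = n := hinv.1 trivial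
  refine ⟨invFunOn orbit univ, horbit.symm hinv.symm, fun v hv => ?_, hτ 0⟩
  obtain ⟨n, -, rfl⟩ := horbit.surjOn hv
  rw [show f (orbit n) = orbit (n + 1) from (iterate_succ_apply' f n x₀).symm, hτ, hτ]

section Rules

variable (a b c k : ℕ)

theorem f_descend (ha : 0 < a) : f (a, b + 1, c, 0) = (a, b, 2 * c, 0) := by
  simp [f, ha]

theorem f_pop : f (a + 1, 0, c, 0) = (a, c, 1, 0) := by
  simp [f]

theorem f_advance : f (0, b, c, 0) = (0, b + 1, 1, 1) := by
  simp [f]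

theorem f_ascend : f (a, b, 2 ^ (k + 1), 1) = (a, b + 1, 2 ^ k, 1) := by
  have hc : 1 < 2 ^ (k + 1) := Nat.one_lt_two_pow k.succ_ne_zero
  simp only [f]
  rw [if_neg one_ne_zero, if_pos hc, pow_succ, Nat.mul_div_cancel _ two_pos]

theorem f_push (hk : 0 < k) : f (a, 2 ^ k, 1, 1) = (a + 1, 0, 2 ^ k, 1) := by
  simp only [f]
  rw [if_neg one_ne_zero, if_neg (lt_irrefl 1), if_pos ⟨k, hk, rfl⟩]

theorem f_switch (hb : ¬∃ k > 0, b = 2 ^ k) : f (a, b, 1, 1) = (a, b, 1, 0) := by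
  simp [f, hb]

end Rules

theorem not_exists_pos_one_eq_two_pow : ¬∃ k > 0, 1 = 2 ^ k := by
  rintro ⟨k, hk, h⟩
  exact (Nat.one_lt_two_pow hk.ne').ne h

theorem mapsTo_f : MapsTo f {v | inV v} {v | inV v} := by
  rintro ⟨a, b, c, d⟩ ⟨⟨k, rfl⟩, rfl | rfl, hpos, hzero⟩
  · rcases a with _ | a
    · rw [f_advance]
      exact ⟨⟨0, rfl⟩, .inr rfl, by omega, fun _ => rfl⟩
    rcases b with _ | b
    · rw [f_pop]
      exact ⟨⟨0, rfl⟩, .inl rfl, fun _ h => absurd h (by positivity), fun _ => rfl⟩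
    · rw [f_descend _ _ _ a.succ_pos, ← pow_succ']
      exact ⟨⟨k + 1, rfl⟩, .inl rfl, fun _ _ => Nat.one_lt_two_pow k.succ_ne_zero, by omega⟩
  · rcases k with _ | k
    · rw [pow_zero]
      by_cases hb : ∃ j > 0, b = 2 ^ j
      · obtain ⟨j, hj, rfl⟩ := hb
        rw [f_push _ _ hj]
        exact ⟨⟨j, rfl⟩, .inr rfl, fun _ _ => Nat.one_lt_two_pow hj.ne', by omega⟩
      · rw [f_switch _ _ hb]
        exact ⟨⟨0, rfl⟩, .inl rfl, by simpa using hpos, fun _ => rfl⟩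
    · rw [f_ascend]
      have hc : 2 ^ (k + 1) ≠ 1 := (Nat.one_lt_two_pow k.succ_ne_zero).ne'
      exact ⟨⟨k, rfl⟩, .inr rfl, by omega, fun ha => absurd (hzero ha) hc⟩

open Classical in
noncomputable def fLeftInv : ℕ × ℕ × ℕ × ℕ → ℕ × ℕ × ℕ × ℕ :=
  fun ⟨a, b, c, d⟩ =>
    if d = 0 then
      if 1 < c then (a, b + 1, c / 2, 0)
      else if ∃ k > 0, b = 2 ^ k then (a + 1, 0, b, 0)
      else (a, b, 1, 1)
    else
      if b = 0 then (a - 1, c, 1, 1)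
      else if a = 0 then (0, b - 1, 1, 0)
      else (a, b - 1, 2 * c, 1)

theorem leftInvOn_fLeftInv_f : LeftInvOn fLeftInv f {v | inV v} := by
  rintro ⟨a, b, c, d⟩ ⟨⟨k, rfl⟩, rfl | rfl, hpos, hzero⟩
  · rcases a with _ | a
    · rw [f_advance]
      simp [fLeftInv, hzero rfl]
    rcases b with _ | b
    · have hk : k ≠ 0 := by rintro rfl; simp at hpos
      rw [f_pop]
      simp [fLeftInv, Nat.pos_iff_ne_zero.mpr hk]
    · rw [f_descend _ _ _ a.succ_pos]
      have hc : 1 < 2 * 2 ^ k := by have := Nat.one_le_two_pow (n := k); omega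
      simp [fLeftInv, hc]
  · rcases k with _ | k
    · rw [pow_zero]
      by_cases hb : ∃ j > 0, b = 2 ^ j
      · obtain ⟨j, hj, rfl⟩ := hb
        rw [f_push _ _ hj]
        simp [fLeftInv]
      · rw [f_switch _ _ hb]
        simp [fLeftInv, hb]
    · have ha : a ≠ 0 := fun ha => absurd (hzero ha) (Nat.one_lt_two_pow k.succ_ne_zero).ne'
      rw [f_ascend]
      simp [fLeftInv, ha, pow_succ']

theorem start_notMem_image_f : ((0, 0, 1, 1) : ℕ × ℕ × ℕ × ℕ) ∉ f '' {v | inV v} := by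
  rintro ⟨v, hv, hfv⟩
  have hv' : v = (0, 1, 1, 1) := by
    rw [← leftInvOn_fLeftInv_f hv, hfv]
    simp [fLeftInv]
  rw [hv', f_switch _ _ not_exists_pos_one_eq_two_pow] at hfv
  simp at hfv

local notation:50 v " ↝ " w => ReflTransGen (fun x y => f x = y) v w

theorem reaches_ascend (a b k j : ℕ) : (a, b, 2 ^ (k + j), 1) ↝ (a, b + j, 2 ^ k, 1) := by
  induction j generalizing b with
  | zero => rfl
  | succ j ih =>
    rw [show b + (j + 1) = b + 1 + j by omega]
    exact .head (f_ascend a b (k + j)) (ih (b + 1))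

theorem reaches_descend {a : ℕ} (ha : 0 < a) (b c j : ℕ) :
    (a, b + j, c, 0) ↝ (a, b, 2 ^ j * c, 0) := by
  induction j generalizing c with
  | zero => rw [pow_zero, one_mul, add_zero]
  | succ j ih =>
    rw [pow_succ, mul_assoc]
    exact .head (f_descend a (b + j) c ha) (ih (2 * c))

theorem reaches_turn (a k : ℕ) : (a, k, 1, 1) ↝ (a, k, 1, 0) := by
  induction k using Nat.strong_induction_on generalizing a with
  | _ k ih =>
    by_cases hk : ∃ j > 0, k = 2 ^ j
    · obtain ⟨j, hj, rfl⟩ := hk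
      calc (a, 2 ^ j, 1, 1) ↝ (a + 1, 0, 2 ^ j, 1) := .single (f_push a j hj)
        _ ↝ (a + 1, j, 1, 1) := by simpa using reaches_ascend (a + 1) 0 0 j
        _ ↝ (a + 1, j, 1, 0) := ih j Nat.lt_two_pow_self (a + 1)
        _ ↝ (a + 1, 0, 2 ^ j, 0) := by simpa using reaches_descend a.succ_pos 0 1 j
        _ ↝ (a, 2 ^ j, 1, 0) := .single (f_pop a (2 ^ j))
    · exact .single (f_switch a k hk)

theorem start_reaches_fst_zero (b : ℕ) : (0, 0, 1, 1) ↝ (0, b, 1, 1) := by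
  induction b with
  | zero => rfl
  | succ b ih => exact (ih.trans (reaches_turn 0 b)).tail (f_advance b 1)

theorem start_reaches_of_snd_pos (a n : ℕ) (hn : 0 < n) : (0, 0, 1, 1) ↝ (a, n, 1, 1) := by
  induction a generalizing n with
  | zero => exact start_reaches_fst_zero n
  | succ a ih =>
    calc (0, 0, 1, 1) ↝ (a, 2 ^ n, 1, 1) := ih _ (Nat.two_pow_pos n)
      _ ↝ (a + 1, 0, 2 ^ n, 1) := .single (f_push a n hn)
      _ ↝ (a + 1, n, 1, 1) := by simpa using reaches_ascend (a + 1) 0 0 n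

theorem start_reaches_of_inV {v : ℕ × ℕ × ℕ × ℕ} (hv : inV v) : (0, 0, 1, 1) ↝ v := by
  obtain ⟨a, b, c, d⟩ := v
  obtain ⟨⟨k, rfl⟩, hd, hpos, hzero⟩ := hv
  rcases a with _ | a
  · rw [hzero rfl]
    rcases hd with rfl | rfl
    · exact (start_reaches_fst_zero b).trans (reaches_turn 0 b)
    · exact start_reaches_fst_zero b
  have hn : 0 < k + b := by
    by_contra h
    obtain ⟨rfl, rfl⟩ : k = 0 ∧ b = 0 := by omega
    simp at hpos
  rcases hd with rfl | rfl
  · calc (0, 0, 1, 1) ↝ (a + 1, b + k, 1, 1) := start_reaches_of_snd_pos _ _ (by omega)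
      _ ↝ (a + 1, b + k, 1, 0) := reaches_turn _ _
      _ ↝ (a + 1, b, 2 ^ k, 0) := by simpa using reaches_descend a.succ_pos b 1 k
  · calc (0, 0, 1, 1) ↝ (a, 2 ^ (k + b), 1, 1) := start_reaches_of_snd_pos _ _ (Nat.two_pow_pos _)
      _ ↝ (a + 1, 0, 2 ^ (k + b), 1) := .single (f_push a _ hn)
      _ ↝ (a + 1, b, 2 ^ k, 1) := by simpa using reaches_ascend (a + 1) 0 k b

theorem stmt_8 : ∃ τ : ℕ × ℕ × ℕ × ℕ → ℕ,
    Set.BijOn τ {v | inV v} Set.univ ∧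
    (∀ v, inV v → τ (f v) = τ v + 1) ∧
    τ (0, 0, 1, 1) = 0 :=
  exists_bijOn_nat_of_reflTransGen mapsTo_f leftInvOn_fLeftInv_f.injOn
    ⟨⟨0, rfl⟩, .inr rfl, by omega, fun _ => rfl⟩ start_notMem_image_f fun _ => start_reaches_of_inV
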